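/- Let d, n be positive natural numbers, let S be a real d × d matrix with operator norm ‖S‖₂ ≤ α (α ≥ 0), let x₁, …, xₙ ∈ ℝ^d with ‖xᵢ‖ ≤ 1, let e ∈ ℝ^d be a unit vector, let B ≥ 0, and let Φ be a nonempty set of functions from ℝ^d to ℝ whose empirical Rademacher complexity on x₁, …, xₙ is at most β/√n (and such that for each sign vector σ the set { (1/n)∑ᵢ σᵢ φ(xᵢ) : φ ∈ Φ } is bounded above). Then the class H of functions h(x) = ⟨S W x, e⟩ + φ(x), where W ranges over real d × d matrices with ‖W‖_F ≤ B and φ ranges over Φ, has empirical Rademacher complexity at most (B α + β)/√n, i.e., 2^{−n} ∑_{σ ∈ {−1,1}ⁿ} sup_{h ∈ H} (1/n) ∑ᵢ σᵢ h(xᵢ) ≤ (B α + β)/√n. -/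

import Mathlib

/-!
For a sign vector σ, the correlation of `h = ⟨S W ·, e⟩ + φ` with σ splits into the linear part
`⟨S W v_σ, e⟩ / n`, where `v_σ = ∑ σᵢ xᵢ`, and the correlation of `φ`. Since
`‖S W‖₂ ≤ ‖S‖₂ ‖W‖₂ ≤ α ‖W‖_F`, the linear part is at most `α B ‖v_σ‖ / n`. Averaged over σ,
the signs are orthogonal (`∑_σ σᵢ σⱼ = 0` for `i ≠ j`), so by Jensen
`2⁻ⁿ ∑_σ ‖v_σ‖ ≤ (∑ ‖xᵢ‖²)^{1/2} ≤ √n`.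
-/

/-- Operator (spectral) norm of a real `d × d` matrix, induced by the Euclidean norm. -/
noncomputable def opNorm {d : ℕ} (M : Matrix (Fin d) (Fin d) ℝ) : ℝ :=
  ‖Matrix.toEuclideanCLM (𝕜 := ℝ) M‖

/-- Frobenius norm of a real `d × d` matrix. -/
noncomputable def frobNorm {d : ℕ} (M : Matrix (Fin d) (Fin d) ℝ) : ℝ :=
  Real.sqrt (∑ i, ∑ j, (M i j) ^ 2)

open Finset RealInnerProductSpace

abbrev SignVector (n : ℕ) := Fin n → ({-1, 1} : Finset ℝ)

namespace SignVector

variable {n : ℕ}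

lemma coe_mul_self (t : ({-1, 1} : Finset ℝ)) : (t : ℝ) * t = 1 := by
  obtain ⟨t, ht⟩ := t
  simp only [mem_insert, mem_singleton] at ht
  rcases ht with rfl | rfl <;> norm_num

lemma card_eq_two_pow (n : ℕ) : Fintype.card (SignVector n) = 2 ^ n := by
  simp [Finset.card_pair (by norm_num : (-1 : ℝ) ≠ 1)]

def flip (i : Fin n) (σ : SignVector n) : SignVector n :=
  Function.update σ i ⟨-σ i, by
    obtain ⟨t, ht⟩ := σ i
    simp only [mem_insert, mem_singleton] at ht ⊢
    rcases ht with rfl | rfl <;> norm_num⟩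

lemma flip_involutive (i : Fin n) : Function.Involutive (flip i) := by
  intro σ
  ext j
  by_cases hj : j = i
  · subst hj; simp [flip]
  · simp [flip, Function.update_of_ne hj]

lemma sum_coe_mul_coe (i j : Fin n) :
    ∑ σ : SignVector n, (σ i : ℝ) * σ j = if i = j then 2 ^ n else 0 := by
  split_ifs with hij
  · subst hij
    simp only [coe_mul_self, sum_const, card_univ, card_eq_two_pow, nsmul_eq_mul, mul_one]
    norm_num
  · have h := Fintype.sum_equiv (flip_involutive i).toPerm (fun σ => (σ i : ℝ) * σ j)
      (fun σ => -((σ i : ℝ) * σ j)) fun σ => by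
        simp only [Function.Involutive.coe_toPerm, flip, Function.update_self,
          Function.update_of_ne (Ne.symm hij)]
        ring
    rw [sum_neg_distrib] at h
    linarith

end SignVector

section InnerProductSpace

variable {E : Type*} [NormedAddCommGroup E] [InnerProductSpace ℝ E] {n : ℕ}

lemma norm_sum_smul_sq (c : Fin n → ℝ) (x : Fin n → E) :
    ‖∑ i, c i • x i‖ ^ 2 = ∑ i, ∑ j, c i * c j * ⟪x i, x j⟫ := by
  rw [← real_inner_self_eq_norm_sq, sum_inner]
  simp_rw [inner_sum, real_inner_smul_left, real_inner_smul_right, mul_assoc]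

lemma sum_norm_sum_sign_smul_sq (x : Fin n → E) :
    ∑ σ : SignVector n, ‖∑ i, (σ i : ℝ) • x i‖ ^ 2 = 2 ^ n * ∑ i, ‖x i‖ ^ 2 := by
  calc ∑ σ : SignVector n, ‖∑ i, (σ i : ℝ) • x i‖ ^ 2
      = ∑ i, ∑ j, (∑ σ : SignVector n, (σ i : ℝ) * σ j) * ⟪x i, x j⟫ := by
        simp only [norm_sum_smul_sq, sum_mul]
        rw [sum_comm]
        exact sum_congr rfl fun i _ => sum_comm
    _ = 2 ^ n * ∑ i, ‖x i‖ ^ 2 := by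
        simp [SignVector.sum_coe_mul_coe, mul_sum]

lemma average_norm_sum_sign_smul_le (x : Fin n → E) :
    (1 / 2 ^ n : ℝ) * ∑ σ : SignVector n, ‖∑ i, (σ i : ℝ) • x i‖ ≤ √(∑ i, ‖x i‖ ^ 2) := by
  have jensen := sum_div_card_sq_le_sum_sq_div_card (s := (univ : Finset (SignVector n)))
    (f := fun σ => ‖∑ i, (σ i : ℝ) • x i‖)
  rw [card_univ, SignVector.card_eq_two_pow, sum_norm_sum_sign_smul_sq, Nat.cast_pow,
    Nat.cast_ofNat] at jensen
  apply Real.le_sqrt_of_sq_le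
  have h2n : (2 : ℝ) ^ n ≠ 0 := by positivity
  rw [one_div_mul_eq_div]
  rwa [mul_div_cancel_left₀ _ h2n] at jensen

lemma average_norm_sum_sign_smul_div_le (x : Fin n → E) (hx : ∀ i, ‖x i‖ ≤ 1) :
    (1 / n : ℝ) * ((1 / 2 ^ n : ℝ) * ∑ σ : SignVector n, ‖∑ i, (σ i : ℝ) • x i‖) ≤ 1 / √n := by
  have hsq : ∑ i, ‖x i‖ ^ 2 ≤ n := by
    calc ∑ i, ‖x i‖ ^ 2 ≤ ∑ _i : Fin n, (1 : ℝ) :=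
          sum_le_sum fun i _ => pow_le_one₀ (norm_nonneg (x i)) (hx i)
      _ = n := by simp
  calc (1 / n : ℝ) * ((1 / 2 ^ n : ℝ) * ∑ σ : SignVector n, ‖∑ i, (σ i : ℝ) • x i‖)
      ≤ (1 / n : ℝ) * √n := by
        gcongr
        exact (average_norm_sum_sign_smul_le x).trans (Real.sqrt_le_sqrt hsq)
    _ = 1 / √n := by rw [one_div_mul_eq_div, Real.sqrt_div_self']

lemma sum_mul_inner_apply_le (c : Fin n → ℝ) (x : Fin n → E) {e : E} (he : ‖e‖ ≤ 1)
    {T : E →L[ℝ] E} {K : ℝ} (hT : ‖T‖ ≤ K) :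
    ∑ i, c i * ⟪T (x i), e⟫ ≤ K * ‖∑ i, c i • x i‖ := by
  calc ∑ i, c i * ⟪T (x i), e⟫ = ⟪T (∑ i, c i • x i), e⟫ := by
        simp [map_sum, sum_inner, real_inner_smul_left]
    _ ≤ ‖T (∑ i, c i • x i)‖ :=
        (real_inner_le_norm _ _).trans (mul_le_of_le_one_right (norm_nonneg _) he)
    _ ≤ K * ‖∑ i, c i • x i‖ := (T.le_opNorm _).trans (by gcongr)

lemma sSup_weighted_sum_linear_add_le {ι : Type*} {a : ℝ} (ha : 0 ≤ a) (c : Fin n → ℝ)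
    (x : Fin n → E) {e : E} (he : ‖e‖ ≤ 1) {T : ι → E →L[ℝ] E} {P : ι → Prop} {K : ℝ}
    (hT : ∀ W, P W → ‖T W‖ ≤ K) (hP : ∃ W, P W) {Φ : Set (E → ℝ)} (hΦ : Φ.Nonempty)
    (hΦb : BddAbove ((fun φ => a * ∑ i, c i * φ (x i)) '' Φ)) :
    sSup ((fun h => a * ∑ i, c i * h (x i)) ''
        {h | ∃ W, P W ∧ ∃ φ ∈ Φ, h = fun z => ⟪T W z, e⟫ + φ z})
      ≤ a * (K * ‖∑ i, c i • x i‖) + sSup ((fun φ => a * ∑ i, c i * φ (x i)) '' Φ) := by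
  obtain ⟨W₀, hW₀⟩ := hP
  obtain ⟨φ₀, hφ₀⟩ := hΦ
  refine csSup_le ⟨_, _, ⟨W₀, hW₀, φ₀, hφ₀, rfl⟩, rfl⟩ ?_
  rintro _ ⟨_, ⟨W, hW, φ, hφ, rfl⟩, rfl⟩
  calc a * ∑ i, c i * (⟪T W (x i), e⟫ + φ (x i))
      = a * ∑ i, c i * ⟪T W (x i), e⟫ + a * ∑ i, c i * φ (x i) := by
        simp only [mul_add, sum_add_distrib]
    _ ≤ a * (K * ‖∑ i, c i • x i‖) + sSup ((fun φ => a * ∑ i, c i * φ (x i)) '' Φ) := by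
        gcongr
        · exact sum_mul_inner_apply_le c x he (hT W hW)
        · exact le_csSup hΦb ⟨φ, hφ, rfl⟩

end InnerProductSpace

lemma opNorm_le_frobNorm {d : ℕ} (W : Matrix (Fin d) (Fin d) ℝ) : opNorm W ≤ frobNorm W := by
  refine ContinuousLinearMap.opNorm_le_bound _ (Real.sqrt_nonneg _) fun y => ?_
  rw [EuclideanSpace.norm_eq, EuclideanSpace.norm_eq, frobNorm, ← Real.sqrt_mul (by positivity)]
  refine Real.sqrt_le_sqrt ?_
  calc ∑ i, ‖Matrix.toEuclideanCLM (𝕜 := ℝ) W y i‖ ^ 2 = ∑ i, (∑ j, W i j * y j) ^ 2 := by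
        simp only [Real.norm_eq_abs, sq_abs]
        rfl
    _ ≤ ∑ i, (∑ j, W i j ^ 2) * ∑ j, ‖y j‖ ^ 2 := by
        simp only [Real.norm_eq_abs, sq_abs]
        exact sum_le_sum fun i _ => sum_mul_sq_le_sq_mul_sq _ _ _
    _ = (∑ i, ∑ j, W i j ^ 2) * ∑ j, ‖y j‖ ^ 2 := by rw [sum_mul]

lemma norm_toEuclideanCLM_mul_le {d : ℕ} {S W : Matrix (Fin d) (Fin d) ℝ} {α B : ℝ}
    (hα : 0 ≤ α) (hS : opNorm S ≤ α) (hW : frobNorm W ≤ B) :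
    ‖Matrix.toEuclideanCLM (𝕜 := ℝ) (S * W)‖ ≤ α * B := by
  rw [map_mul]
  exact (norm_mul_le _ _).trans <|
    mul_le_mul hS ((opNorm_le_frobNorm W).trans hW) (norm_nonneg _) hα

theorem rademacher_structured_plus_correction_general
    (d n : ℕ)
    (S : Matrix (Fin d) (Fin d) ℝ) (α : ℝ) (hα : 0 ≤ α) (hS : opNorm S ≤ α)
    (x : Fin n → EuclideanSpace ℝ (Fin d)) (hx : ∀ i, ‖x i‖ ≤ 1)
    (e : EuclideanSpace ℝ (Fin d)) (he : ‖e‖ = 1)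
    (B : ℝ) (hB : 0 ≤ B) (β : ℝ)
    (Φ : Set (EuclideanSpace ℝ (Fin d) → ℝ)) (hΦ : Φ.Nonempty)
    (hΦb : ∀ σ : Fin n → ({-1, 1} : Finset ℝ),
      BddAbove ((fun φ => (1 / n : ℝ) * ∑ i, (σ i : ℝ) * φ (x i)) '' Φ))
    (hΦrad : (1 / 2 ^ n : ℝ) * ∑ σ : Fin n → ({-1, 1} : Finset ℝ),
        sSup ((fun φ => (1 / n : ℝ) * ∑ i, (σ i : ℝ) * φ (x i)) '' Φ)
      ≤ β / Real.sqrt n) :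
    (1 / 2 ^ n : ℝ) * ∑ σ : Fin n → ({-1, 1} : Finset ℝ),
        sSup ((fun h => (1 / n : ℝ) * ∑ i, (σ i : ℝ) * h (x i)) ''
          {h : EuclideanSpace ℝ (Fin d) → ℝ |
            ∃ W : Matrix (Fin d) (Fin d) ℝ, frobNorm W ≤ B ∧ ∃ φ ∈ Φ,
              h = fun z =>
                (inner ℝ (Matrix.toEuclideanCLM (𝕜 := ℝ) (S * W) z) e : ℝ) + φ z})
      ≤ (B * α + β) / Real.sqrt n := by
  have hzero : frobNorm (0 : Matrix (Fin d) (Fin d) ℝ) ≤ B := by simpa [frobNorm] using hB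
  calc _ ≤ (1 / 2 ^ n : ℝ) * ∑ σ : SignVector n,
          ((1 / n : ℝ) * (α * B * ‖∑ i, (σ i : ℝ) • x i‖)
            + sSup ((fun φ => (1 / n : ℝ) * ∑ i, (σ i : ℝ) * φ (x i)) '' Φ)) := by
        gcongr with σ
        exact sSup_weighted_sum_linear_add_le (P := fun W => frobNorm W ≤ B) (by positivity) _ x
          he.le (fun W hW => norm_toEuclideanCLM_mul_le hα hS hW) ⟨0, hzero⟩ hΦ (hΦb σ)
    _ = α * B * ((1 / n : ℝ) *
            ((1 / 2 ^ n : ℝ) * ∑ σ : SignVector n, ‖∑ i, (σ i : ℝ) • x i‖))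
          + (1 / 2 ^ n : ℝ) * ∑ σ : SignVector n,
            sSup ((fun φ => (1 / n : ℝ) * ∑ i, (σ i : ℝ) * φ (x i)) '' Φ) := by
        simp only [sum_add_distrib, ← mul_sum]
        ring
    _ ≤ α * B * (1 / Real.sqrt n) + β / Real.sqrt n := by
        gcongr
        exact average_norm_sum_sign_smul_div_le x hx
    _ = (B * α + β) / Real.sqrt n := by ring

/-- The class of functions `h(x) = ⟨S W x, e⟩ + φ(x)` with
`‖W‖_F ≤ B` and `φ ∈ Φ`, where `‖S‖₂ ≤ α`, `‖xᵢ‖ ≤ 1`, `‖e‖ = 1`, and `Φ` has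
empirical Rademacher complexity at most `β / √n`, has empirical Rademacher
complexity at most `(B α + β) / √n`. -/
theorem rademacher_structured_plus_correction
    (d n : ℕ) (hd : 0 < d) (hn : 0 < n)
    (S : Matrix (Fin d) (Fin d) ℝ) (α : ℝ) (hα : 0 ≤ α) (hS : opNorm S ≤ α)
    (x : Fin n → EuclideanSpace ℝ (Fin d)) (hx : ∀ i, ‖x i‖ ≤ 1)
    (e : EuclideanSpace ℝ (Fin d)) (he : ‖e‖ = 1)
    (B : ℝ) (hB : 0 ≤ B) (β : ℝ)
    (Φ : Set (EuclideanSpace ℝ (Fin d) → ℝ)) (hΦ : Φ.Nonempty)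
    (hΦb : ∀ σ : Fin n → ({-1, 1} : Finset ℝ),
      BddAbove ((fun φ => (1 / n : ℝ) * ∑ i, (σ i : ℝ) * φ (x i)) '' Φ))
    (hΦrad : (1 / 2 ^ n : ℝ) * ∑ σ : Fin n → ({-1, 1} : Finset ℝ),
        sSup ((fun φ => (1 / n : ℝ) * ∑ i, (σ i : ℝ) * φ (x i)) '' Φ)
      ≤ β / Real.sqrt n) :
    (1 / 2 ^ n : ℝ) * ∑ σ : Fin n → ({-1, 1} : Finset ℝ),
        sSup ((fun h => (1 / n : ℝ) * ∑ i, (σ i : ℝ) * h (x i)) ''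
          {h : EuclideanSpace ℝ (Fin d) → ℝ |
            ∃ W : Matrix (Fin d) (Fin d) ℝ, frobNorm W ≤ B ∧ ∃ φ ∈ Φ,
              h = fun z =>
                (inner ℝ (Matrix.toEuclideanCLM (𝕜 := ℝ) (S * W) z) e : ℝ) + φ z})
      ≤ (B * α + β) / Real.sqrt n :=
  rademacher_structured_plus_correction_general d n S α hα hS x hx e he B hB β Φ hΦ hΦb hΦrad
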